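/- arXiv:1708.06438 — 5 statements merged into one kernel-verified Lean document; each statement's English description precedes it below -/
import Mathlib

section
/- For every SPGM S and every subtree τ ∈ T(S), the underlying directed graph of τ is a rooted tree: it is connected, contains no cycles (even as an undirected graph), and every kept node other than the root has exactly one parent within τ. -/
attribute [local instance] Classical.propDecidable

noncomputable section

/-- Indicator variable `[v]_k` relative to a partial assignment `y`
(`y v = none` means `v` is unobserved). -/
def Indicator {Var : Type} (y : Var → Option ℕ) (v : Var) (k : ℕ) : ℝ :=
  match y v with
  | none => 1
  | some i => if i = k then 1 else 0

/-- Kinds of nodes of a sum-product graphical model: variable nodes (Vnodes),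
product nodes, observed sum nodes and unobserved sum nodes. -/
inductive SPGMKind (Xvar Zvar : Type) : Type where
  | vnode (x : Xvar)
  | prod
  | sumObs (z : Zvar)
  | sumUnobs

/-- A sum-product graphical model (SPGM) over variables `Xvar` (with domain sizes `Xdom`)
and context variables `Zvar` (with domain sizes `Zdom`).  The underlying directed graph
is given by `children`; acyclicity is encoded by the strictly decreasing `rank`.
`Q`/`W` are the edge weights of observed/unobserved sum nodes (`Q t k` is the weight of the
`k`-th child edge of `t`), `Pcond t s k j` is the conditional table `P_{s,t}(k | j)` used when
`s` is a Vparent of the Vnode `t`, and `Punary t k` is the unary table `P_t(k)` used when the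
Vnode `t` has no Vparent. -/
structure SPGM (Xvar Zvar : Type) (Xdom : Xvar → ℕ) (Zdom : Zvar → ℕ) where
  V : Type
  fintypeV : Fintype V
  decEqV : DecidableEq V
  root : V
  kind : V → SPGMKind Xvar Zvar
  children : V → List V
  rank : V → ℕ
  rank_lt : ∀ t c, c ∈ children t → rank c < rank t
  Q : V → ℕ → ℝ
  W : V → ℕ → ℝ
  Pcond : V → V → ℕ → ℕ → ℝ
  Punary : V → ℕ → ℝ

attribute [instance] SPGM.fintypeV SPGM.decEqV

namespace SPGM

variable {Xvar Zvar : Type} {Xdom : Xvar → ℕ} {Zdom : Zvar → ℕ}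

def isVnode (S : SPGM Xvar Zvar Xdom Zdom) (t : S.V) : Prop :=
  ∃ x, S.kind t = SPGMKind.vnode x

def isProd (S : SPGM Xvar Zvar Xdom Zdom) (t : S.V) : Prop :=
  S.kind t = SPGMKind.prod

def isSumObs (S : SPGM Xvar Zvar Xdom Zdom) (t : S.V) : Prop :=
  ∃ z, S.kind t = SPGMKind.sumObs z

def isSumUnobs (S : SPGM Xvar Zvar Xdom Zdom) (t : S.V) : Prop :=
  S.kind t = SPGMKind.sumUnobs

def isSum (S : SPGM Xvar Zvar Xdom Zdom) (t : S.V) : Prop :=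
  S.isSumObs t ∨ S.isSumUnobs t

/-- The variable labeling a node, if any. -/
def label (S : SPGM Xvar Zvar Xdom Zdom) (t : S.V) : Option (Xvar ⊕ Zvar) :=
  match S.kind t with
  | SPGMKind.vnode x => some (Sum.inl x)
  | SPGMKind.sumObs z => some (Sum.inr z)
  | _ => none

/-- Domain size of the variable of a Vnode (`0` for non-Vnodes). -/
def domOf (S : SPGM Xvar Zvar Xdom Zdom) (t : S.V) : ℕ :=
  match S.kind t with
  | SPGMKind.vnode x => Xdom x
  | _ => 0

/-- Reachability along directed edges. -/
def Reach (S : SPGM Xvar Zvar Xdom Zdom) : S.V → S.V → Prop :=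
  Relation.ReflTransGen fun a b => b ∈ S.children a

/-- The scope of a node: all variables labeling nodes of the sub-DAG rooted at it. -/
def scope (S : SPGM Xvar Zvar Xdom Zdom) (t : S.V) : Set (Xvar ⊕ Zvar) :=
  {v | ∃ u, S.Reach t u ∧ S.label u = some v}

/-- There is a (nonempty) directed path from `s` to `t` containing no intermediate Vnode. -/
inductive ReachNoV (S : SPGM Xvar Zvar Xdom Zdom) : S.V → S.V → Prop where
  | base {s c : S.V} : c ∈ S.children s → ReachNoV S s c
  | step {s t c : S.V} : ReachNoV S s t → ¬ S.isVnode t → c ∈ S.children t → ReachNoV S s c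

/-- `s` is a Vparent of `t`. -/
def vparent (S : SPGM Xvar Zvar Xdom Zdom) (s t : S.V) : Prop :=
  S.isVnode s ∧ S.ReachNoV s t

/-- Validity of an SPGM: structural conditions and nonnegativity of all parameters. -/
structure Valid (S : SPGM Xvar Zvar Xdom Zdom) : Prop where
  xdom_pos : ∀ x : Xvar, 0 < Xdom x
  zdom_pos : ∀ z : Zvar, 0 < Zdom z
  reach_root : ∀ v : S.V, S.Reach S.root v
  vnode_child : ∀ t : S.V, S.isVnode t → (S.children t).length ≤ 1
  vnode_scope : ∀ (t : S.V) (x : Xvar) (c : S.V), S.kind t = SPGMKind.vnode x →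
    c ∈ S.children t → Sum.inl x ∉ S.scope c
  sum_child : ∀ t : S.V, S.isSum t → S.children t ≠ []
  sumObs_card : ∀ (t : S.V) (z : Zvar), S.kind t = SPGMKind.sumObs z →
    (S.children t).length = Zdom z
  sum_scope : ∀ t : S.V, S.isSum t →
    ∀ c ∈ S.children t, ∀ c' ∈ S.children t, S.scope c = S.scope c'
  sumObs_scope : ∀ (t : S.V) (z : Zvar) (c : S.V), S.kind t = SPGMKind.sumObs z →
    c ∈ S.children t → Sum.inr z ∉ S.scope c
  prod_child : ∀ t : S.V, S.isProd t → S.children t ≠ []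
  prod_scope : ∀ t : S.V, S.isProd t →
    (S.children t).Pairwise fun c c' => Disjoint (S.scope c) (S.scope c')
  Q_nonneg : ∀ (t : S.V) (k : ℕ), 0 ≤ S.Q t k
  W_nonneg : ∀ (t : S.V) (k : ℕ), 0 ≤ S.W t k
  Pcond_nonneg : ∀ (t s : S.V) (k j : ℕ), 0 ≤ S.Pcond t s k j
  Punary_nonneg : ∀ (t : S.V) (k : ℕ), 0 ≤ S.Punary t k

/-- The conditional/unary tables of the SPGM are normalized probability tables. -/
structure Normalized (S : SPGM Xvar Zvar Xdom Zdom) : Prop where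
  Pcond_sum : ∀ t s : S.V, S.isVnode t → S.vparent s t → ∀ j < S.domOf s,
    ∑ k ∈ Finset.range (S.domOf t), S.Pcond t s k j = 1
  Punary_sum : ∀ t : S.V, S.isVnode t → (¬ ∃ s, S.vparent s t) →
    ∑ k ∈ Finset.range (S.domOf t), S.Punary t k = 1

/-- Message passing, with explicit fuel (the fuel never runs out thanks to `rank_lt`):
`msgAux S y n t s j` is the message `μ_{t→s;j}` (`s = none` denotes the fictitious root). -/
def msgAux (S : SPGM Xvar Zvar Xdom Zdom) (y : (Xvar ⊕ Zvar) → Option ℕ) :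
    ℕ → S.V → Option S.V → ℕ → ℝ
  | 0, _, _, _ => 1
  | n + 1, t, s, j =>
    match S.kind t with
    | SPGMKind.vnode x =>
        ∑ k ∈ Finset.range (Xdom x),
          (match s with
            | some s' => S.Pcond t s' k j
            | none => S.Punary t k) *
            Indicator y (Sum.inl x) k *
            (match S.children t with
              | [] => (1 : ℝ)
              | c :: _ => msgAux S y n c (some t) k)
    | SPGMKind.prod => ((S.children t).map fun c => msgAux S y n c s j).prod
    | SPGMKind.sumObs z =>
        ∑ k ∈ Finset.range (S.children t).length,
          Indicator y (Sum.inr z) k * S.Q t k * msgAux S y n ((S.children t).getD k t) s j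
    | SPGMKind.sumUnobs =>
        ∑ k ∈ Finset.range (S.children t).length,
          S.W t k * msgAux S y n ((S.children t).getD k t) s j

/-- The message `μ_{t→s;j}` sent by node `t` under partial assignment `y`. -/
def msg (S : SPGM Xvar Zvar Xdom Zdom) (y : (Xvar ⊕ Zvar) → Option ℕ)
    (t : S.V) (s : Option S.V) (j : ℕ) : ℝ :=
  msgAux S y (S.rank t + 1) t s j

/-- Evaluation of the SPGM at the partial assignment `y` (value of the root message). -/
def eval (S : SPGM Xvar Zvar Xdom Zdom) (y : (Xvar ⊕ Zvar) → Option ℕ) : ℝ :=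
  S.msg y S.root none 0

end SPGM

namespace SPGM

variable {Xvar Zvar : Type} {Xdom : Xvar → ℕ} {Zdom : Zvar → ℕ}

/-- Edge of the subtree determined by the choice function `σ`: a Vnode or product node keeps
all its child edges, a sum node `t` keeps only the edge to its `σ t`-th child. -/
def subEdge (S : SPGM Xvar Zvar Xdom Zdom) (σ : S.V → ℕ) (t c : S.V) : Prop :=
  (¬ S.isSum t ∧ c ∈ S.children t) ∨ (S.isSum t ∧ c = (S.children t).getD (σ t) t)

/-- `KeepAt S σ r v`: node `v` is kept in the subtree with root `r` determined by the
choice function `σ`. -/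
inductive KeepAt (S : SPGM Xvar Zvar Xdom Zdom) (σ : S.V → ℕ) : S.V → S.V → Prop where
  | refl (r : S.V) : KeepAt S σ r r
  | step {r t c : S.V} : KeepAt S σ r t → S.subEdge σ t c → KeepAt S σ r c

/-- Node `v` is kept in the subtree of `S` (rooted at the root of `S`) determined by `σ`. -/
def Keep (S : SPGM Xvar Zvar Xdom Zdom) (σ : S.V → ℕ) (v : S.V) : Prop :=
  KeepAt S σ S.root v

/-- The set of subtrees of the sub-SPGM rooted at `r`, represented by their canonical
choice functions: `σ t` is a valid child index at every sum node and is `0` at every node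
that is not a kept sum node.  Distinct canonical choice functions correspond exactly to
distinct subtrees. -/
def subtreesAt (S : SPGM Xvar Zvar Xdom Zdom) (r : S.V) : Set (S.V → ℕ) :=
  {σ | (∀ t : S.V, S.isSum t → σ t < (S.children t).length) ∧
       (∀ t : S.V, ¬ (KeepAt S σ r t ∧ S.isSum t) → σ t = 0)}

/-- The set `T(S)` of subtrees of `S`, represented by canonical choice functions. -/
def subtrees (S : SPGM Xvar Zvar Xdom Zdom) : Set (S.V → ℕ) :=
  S.subtreesAt S.root

/-- Message passing within the subtree determined by `σ` (with fuel, as in `msgAux`):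
at a sum node only the chosen child is used. -/
def msgSubAux (S : SPGM Xvar Zvar Xdom Zdom) (σ : S.V → ℕ)
    (y : (Xvar ⊕ Zvar) → Option ℕ) : ℕ → S.V → Option S.V → ℕ → ℝ
  | 0, _, _, _ => 1
  | n + 1, t, s, j =>
    match S.kind t with
    | SPGMKind.vnode x =>
        ∑ k ∈ Finset.range (Xdom x),
          (match s with
            | some s' => S.Pcond t s' k j
            | none => S.Punary t k) *
            Indicator y (Sum.inl x) k *
            (match S.children t with
              | [] => (1 : ℝ)
              | c :: _ => msgSubAux S σ y n c (some t) k)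
    | SPGMKind.prod => ((S.children t).map fun c => msgSubAux S σ y n c s j).prod
    | SPGMKind.sumObs z =>
        Indicator y (Sum.inr z) (σ t) * S.Q t (σ t) *
          msgSubAux S σ y n ((S.children t).getD (σ t) t) s j
    | SPGMKind.sumUnobs =>
        S.W t (σ t) * msgSubAux S σ y n ((S.children t).getD (σ t) t) s j

/-- The message `μ_{t→s;j}` computed within the subtree determined by `σ`. -/
def msgSub (S : SPGM Xvar Zvar Xdom Zdom) (σ : S.V → ℕ) (y : (Xvar ⊕ Zvar) → Option ℕ)
    (t : S.V) (s : Option S.V) (j : ℕ) : ℝ :=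
  msgSubAux S σ y (S.rank t + 1) t s j

/-- Evaluation of the subtree `τ` of `S` determined by `σ` at the partial assignment `y`. -/
def evalSub (S : SPGM Xvar Zvar Xdom Zdom) (σ : S.V → ℕ)
    (y : (Xvar ⊕ Zvar) → Option ℕ) : ℝ :=
  S.msgSub σ y S.root none 0

/-- An edge of `S` kept in the subtree determined by `σ`. -/
def keptEdge (S : SPGM Xvar Zvar Xdom Zdom) (σ : S.V → ℕ) (t c : S.V) : Prop :=
  S.Keep σ t ∧ S.subEdge σ t c

/-- The underlying undirected (simple) graph of the subtree determined by `σ`: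
vertices are the kept nodes, adjacency is the (undirected) kept-edge relation. -/
def subtreeGraph (S : SPGM Xvar Zvar Xdom Zdom) (σ : S.V → ℕ) : SimpleGraph S.V where
  Adj a b := a ≠ b ∧ S.Keep σ a ∧ S.Keep σ b ∧ (S.keptEdge σ a b ∨ S.keptEdge σ b a)
  symm := by
    constructor
    intro a b h
    exact ⟨Ne.symm h.1, h.2.2.1, h.2.1, h.2.2.2.symm⟩
  loopless := by
    constructor
    intro a h
    exact h.1 rfl

/-- The scope of the subtree determined by `σ`: all variables labeling kept nodes. -/
def subtreeScope (S : SPGM Xvar Zvar Xdom Zdom) (σ : S.V → ℕ) : Set (Xvar ⊕ Zvar) :=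
  {v | ∃ t : S.V, S.Keep σ t ∧ S.label t = some v}

/-- The coefficient `λ_τ` of the subtree determined by `σ`: the product of the weights of
all kept sum nodes. -/
def lam (S : SPGM Xvar Zvar Xdom Zdom) (σ : S.V → ℕ) : ℝ :=
  (∏ t : S.V, if S.Keep σ t ∧ S.isSumObs t then S.Q t (σ t) else 1) *
    (∏ t : S.V, if S.Keep σ t ∧ S.isSumUnobs t then S.W t (σ t) else 1)

/-- The product of the indicator variables in `z_τ` (one for each kept observed sum node),
evaluated relative to the partial assignment `y`. -/
def zInd (S : SPGM Xvar Zvar Xdom Zdom) (σ : S.V → ℕ)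
    (y : (Xvar ⊕ Zvar) → Option ℕ) : ℝ :=
  ∏ t : S.V,
    match S.kind t with
    | SPGMKind.sumObs z => if S.Keep σ t then Indicator y (Sum.inr z) (σ t) else 1
    | _ => 1

/-- Value of a total assignment `x` of the X-variables at a Vnode (`0` at other nodes). -/
def xval (S : SPGM Xvar Zvar Xdom Zdom) (x : Xvar → ℕ) (t : S.V) : ℕ :=
  match S.kind t with
  | SPGMKind.vnode xv => x xv
  | _ => 0

/-- A directed path along edges of the subtree determined by `σ` with no intermediate
Vnode. -/
inductive ReachNoVSub (S : SPGM Xvar Zvar Xdom Zdom) (σ : S.V → ℕ) : S.V → S.V → Prop where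
  | base {s c : S.V} : S.subEdge σ s c → ReachNoVSub S σ s c
  | step {s t c : S.V} : ReachNoVSub S σ s t → ¬ S.isVnode t → S.subEdge σ t c →
      ReachNoVSub S σ s c

/-- `s` is a Vparent of `t` within the subtree determined by `σ`. -/
def vparentSub (S : SPGM Xvar Zvar Xdom Zdom) (σ : S.V → ℕ) (s t : S.V) : Prop :=
  S.isVnode s ∧ ReachNoVSub S σ s t

/-- The tree graphical model distribution `P_τ` of the subtree determined by `σ`, as a
function of a total assignment `x` of the X-variables: the product of the unary tables of
the kept Vnodes without Vparent in the subtree and of the conditional tables of all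
Vparent-child Vnode pairs of the subtree. -/
def Ptau (S : SPGM Xvar Zvar Xdom Zdom) (σ : S.V → ℕ) (x : Xvar → ℕ) : ℝ :=
  (∏ t : S.V,
      if S.Keep σ t ∧ S.isVnode t ∧ ¬ (∃ s, S.Keep σ s ∧ S.vparentSub σ s t) then
        S.Punary t (S.xval x t)
      else 1) *
    ∏ p : S.V × S.V,
      if S.Keep σ p.1 ∧ S.Keep σ p.2 ∧ S.isVnode p.2 ∧ S.vparentSub σ p.1 p.2 then
        S.Pcond p.2 p.1 (S.xval x p.2) (S.xval x p.1)
      else 1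

/-- The number of edges of the DAG underlying `S`. -/
def edgeCount (S : SPGM Xvar Zvar Xdom Zdom) : ℕ :=
  ∑ v : S.V, (S.children v).length

end SPGM

/-!
Every node has nonempty scope, since a node of minimal rank below it is a childless
Vnode.  A node with two distinct kept child edges is a
product node, whose children have disjoint scopes, so no node lies below two different kept
children of the same node.  Comparing the two descents from the root to two kept parents of
a node therefore shows that they coincide.  On a cycle of the undirected subtree, the vertex
of minimal rank would have two kept parents, so there is none.
-/

namespace SimpleGraph

variable {V α : Type*} [LinearOrder α] {G : SimpleGraph V}

theorem isAcyclic_of_unique_upper_neighbor (rk : V → α)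
    (hadj : ∀ ⦃a b⦄, G.Adj a b → rk a ≠ rk b)
    (hupper : ∀ ⦃a b c⦄, G.Adj c a → G.Adj c b → rk c < rk a → rk c < rk b → a = b) :
    G.IsAcyclic := by
  intro v p hp
  obtain ⟨u, hu, hmin⟩ := Finset.exists_min_image p.support.toFinset rk
    ⟨v, List.mem_toFinset.mpr p.start_mem_support⟩
  rw [List.mem_toFinset] at hu
  set q := p.rotate u hu
  have hq : q.IsCycle := hp.rotate hu
  have hq_nil := hq.not_nil
  have hlt : ∀ w, G.Adj u w → w ∈ q.support → rk u < rk w := fun w huw hw =>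
    lt_of_le_of_ne (hmin w (List.mem_toFinset.mpr ((p.mem_support_rotate_iff u hu).mp hw)))
      (hadj huw)
  have hsnd := q.adj_snd hq_nil
  have hpen := (q.adj_penultimate hq_nil).symm
  exact hq.snd_ne_penultimate <| hupper hsnd hpen
    (hlt _ hsnd (q.getVert_mem_support _)) (hlt _ hpen (q.getVert_mem_support _))

end SimpleGraph

namespace SPGM

variable {Xvar Zvar : Type} {Xdom : Xvar → ℕ} {Zdom : Zvar → ℕ}
  {S : SPGM Xvar Zvar Xdom Zdom} {σ : S.V → ℕ}

theorem keepAt_iff_reflTransGen {r v : S.V} :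
    S.KeepAt σ r v ↔ Relation.ReflTransGen (S.subEdge σ) r v := by
  constructor
  · intro h
    induction h with
    | refl => exact .refl
    | step _ e ih => exact ih.tail e
  · intro h
    induction h with
    | refl => exact .refl _
    | tail _ e ih => exact ih.step e

theorem mem_children_of_subEdge (hσ : ∀ t, S.isSum t → σ t < (S.children t).length)
    {t c : S.V} (h : S.subEdge σ t c) : c ∈ S.children t := by
  rcases h with ⟨-, hc⟩ | ⟨hsum, rfl⟩
  · exact hc
  · rw [List.getD_eq_getElem _ _ (hσ t hsum)]
    exact List.getElem_mem _

theorem rank_lt_of_subEdge (hσ : ∀ t, S.isSum t → σ t < (S.children t).length)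
    {t c : S.V} (h : S.subEdge σ t c) : S.rank c < S.rank t :=
  S.rank_lt t c (mem_children_of_subEdge hσ h)

theorem reach_of_keepAt (hσ : ∀ t, S.isSum t → σ t < (S.children t).length)
    {a b : S.V} (h : S.KeepAt σ a b) : S.Reach a b :=
  Relation.ReflTransGen.mono (fun _ _ => mem_children_of_subEdge hσ) _ _
    (keepAt_iff_reflTransGen.mp h)

theorem rank_le_of_reach {a b : S.V} (h : S.Reach a b) : S.rank b ≤ S.rank a := by
  induction h with
  | refl => exact le_rfl
  | tail _ e ih => exact (S.rank_lt _ _ e).le.trans ih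

theorem scope_subset_of_reach {a b : S.V} (h : S.Reach a b) : S.scope b ⊆ S.scope a :=
  fun _ ⟨u, hu, hl⟩ => ⟨u, h.trans hu, hl⟩

theorem exists_reach_children_eq_nil (t : S.V) : ∃ u, S.Reach t u ∧ S.children u = [] := by
  obtain ⟨u, hu_mem, hmin⟩ := Finset.exists_min_image (Finset.univ.filter (S.Reach t)) S.rank
    ⟨t, Finset.mem_filter.mpr ⟨Finset.mem_univ _, .refl⟩⟩
  have hu : S.Reach t u := (Finset.mem_filter.mp hu_mem).2
  refine ⟨u, hu, List.eq_nil_iff_forall_not_mem.mpr fun c hc => ?_⟩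
  have := hmin c (Finset.mem_filter.mpr ⟨Finset.mem_univ _, hu.tail hc⟩)
  exact absurd (S.rank_lt u c hc) (not_lt.mpr this)

theorem isVnode_of_children_eq_nil (hS : S.Valid) {u : S.V} (h : S.children u = []) :
    S.isVnode u := by
  match hk : S.kind u with
  | .vnode x => exact ⟨x, hk⟩
  | .prod => exact absurd h (hS.prod_child u hk)
  | .sumObs z => exact absurd h (hS.sum_child u (Or.inl ⟨z, hk⟩))
  | .sumUnobs => exact absurd h (hS.sum_child u (Or.inr hk))

theorem scope_nonempty (hS : S.Valid) (t : S.V) : (S.scope t).Nonempty := by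
  obtain ⟨u, hu, hleaf⟩ := exists_reach_children_eq_nil t
  obtain ⟨x, hx⟩ := isVnode_of_children_eq_nil hS hleaf
  exact ⟨Sum.inl x, u, hu, by simp [label, hx]⟩

theorem disjoint_scope_of_subEdge (hS : S.Valid)
    (hσ : ∀ t, S.isSum t → σ t < (S.children t).length)
    {t c d : S.V} (hc : S.subEdge σ t c) (hd : S.subEdge σ t d) (hcd : c ≠ d) :
    Disjoint (S.scope c) (S.scope d) := by
  have hc_mem := mem_children_of_subEdge hσ hc
  have hd_mem := mem_children_of_subEdge hσ hd
  rcases hc with ⟨hsum, -⟩ | ⟨hsum, rfl⟩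
  · match hk : S.kind t with
    | .vnode x =>
      have hlen := hS.vnode_child t ⟨x, hk⟩
      generalize S.children t = l at hc_mem hd_mem hlen
      obtain _ | ⟨y, _ | ⟨y', l⟩⟩ := l
      · simp at hc_mem
      · simp_all
      · simp at hlen
    | .prod =>
      have : Std.Symm fun c c' : S.V => Disjoint (S.scope c) (S.scope c') :=
        ⟨fun _ _ h => h.symm⟩
      exact (hS.prod_scope t hk).forall hc_mem hd_mem hcd
    | .sumObs z => exact absurd (Or.inl ⟨z, hk⟩) hsum
    | .sumUnobs => exact absurd (Or.inr hk) hsum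
  · rcases hd with ⟨hn, -⟩ | ⟨-, rfl⟩
    · exact absurd hsum hn
    · exact absurd rfl hcd

theorem eq_of_subEdge_of_reach (hS : S.Valid)
    (hσ : ∀ t, S.isSum t → σ t < (S.children t).length)
    {t c d x : S.V} (hc : S.subEdge σ t c) (hd : S.subEdge σ t d)
    (hcx : S.Reach c x) (hdx : S.Reach d x) : c = d := by
  by_contra hcd
  obtain ⟨v, hv⟩ := scope_nonempty hS x
  exact Set.disjoint_left.mp (disjoint_scope_of_subEdge hS hσ hc hd hcd)
    (scope_subset_of_reach hcx hv) (scope_subset_of_reach hdx hv)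

theorem eq_of_keepAt_of_subEdge (hS : S.Valid)
    (hσ : ∀ t, S.isSum t → σ t < (S.children t).length)
    {t t' c : S.V} (h : S.KeepAt σ t t') (hc : S.subEdge σ t c) (hc' : S.subEdge σ t' c) :
    t = t' := by
  rcases (keepAt_iff_reflTransGen.mp h).cases_head with rfl | ⟨d, hd, hdt'⟩
  · rfl
  have hdt' : S.Reach d t' := reach_of_keepAt hσ (keepAt_iff_reflTransGen.mpr hdt')
  have hcd : c = d :=
    eq_of_subEdge_of_reach hS hσ hc hd .refl (hdt'.tail (mem_children_of_subEdge hσ hc'))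
  subst hcd
  exact absurd (rank_le_of_reach hdt') (not_le.mpr (rank_lt_of_subEdge hσ hc'))

theorem eq_of_keepAt_of_keepAt_of_subEdge (hS : S.Valid)
    (hσ : ∀ t, S.isSum t → σ t < (S.children t).length)
    {v t t' c : S.V} (h : S.KeepAt σ v t) (h' : S.KeepAt σ v t')
    (hc : S.subEdge σ t c) (hc' : S.subEdge σ t' c) : t = t' := by
  have below : ∀ {a b}, S.KeepAt σ a b → S.subEdge σ b c → S.Reach a c := fun hab hbc =>
    (reach_of_keepAt hσ hab).tail (mem_children_of_subEdge hσ hbc)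
  rw [keepAt_iff_reflTransGen] at h h'
  induction h using Relation.ReflTransGen.head_induction_on generalizing t' with
  | refl => exact eq_of_keepAt_of_subEdge hS hσ (keepAt_iff_reflTransGen.mpr h') hc hc'
  | head hvd₁ hd₁t ih =>
    rcases h'.cases_head with rfl | ⟨d₂, hvd₂, hd₂t'⟩
    · exact (eq_of_keepAt_of_subEdge hS hσ
        (keepAt_iff_reflTransGen.mpr (hd₁t.head hvd₁)) hc' hc).symm
    · have hd : _ = d₂ := eq_of_subEdge_of_reach hS hσ hvd₁ hvd₂
        (below (keepAt_iff_reflTransGen.mpr hd₁t) hc)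
        (below (keepAt_iff_reflTransGen.mpr hd₂t') hc')
      subst hd
      exact ih hd₂t' hc'

theorem eq_of_keptEdge_of_keptEdge (hS : S.Valid)
    (hσ : ∀ t, S.isSum t → σ t < (S.children t).length)
    {t t' c : S.V} (h : S.keptEdge σ t c) (h' : S.keptEdge σ t' c) : t = t' :=
  eq_of_keepAt_of_keepAt_of_subEdge hS hσ h.1 h'.1 h.2 h'.2

theorem reflTransGen_keptEdge_of_keep {v : S.V} (hv : S.Keep σ v) :
    Relation.ReflTransGen (S.keptEdge σ) S.root v := by
  induction hv with
  | refl => exact .refl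
  | step ht e ih => exact ih.tail ⟨ht, e⟩

theorem exists_keptEdge_of_keep {c : S.V} (hc : S.Keep σ c) (hne : c ≠ S.root) :
    ∃ t, S.keptEdge σ t c := by
  cases hc with
  | refl => exact absurd rfl hne
  | step ht e => exact ⟨_, ht, e⟩

theorem rank_ne_of_subtreeGraph_adj (hσ : ∀ t, S.isSum t → σ t < (S.children t).length)
    {a b : S.V} (h : (S.subtreeGraph σ).Adj a b) : S.rank a ≠ S.rank b := by
  rcases h with ⟨-, -, -, h | h⟩
  · exact (rank_lt_of_subEdge hσ h.2).ne'
  · exact (rank_lt_of_subEdge hσ h.2).ne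

theorem keptEdge_of_subtreeGraph_adj (hσ : ∀ t, S.isSum t → σ t < (S.children t).length)
    {a b : S.V} (h : (S.subtreeGraph σ).Adj a b) (hab : S.rank b < S.rank a) :
    S.keptEdge σ a b := by
  rcases h with ⟨-, -, -, h | h⟩
  · exact h
  · exact absurd (rank_lt_of_subEdge hσ h.2) hab.not_gt

theorem subtreeGraph_isAcyclic (hS : S.Valid)
    (hσ : ∀ t, S.isSum t → σ t < (S.children t).length) : (S.subtreeGraph σ).IsAcyclic :=
  SimpleGraph.isAcyclic_of_unique_upper_neighbor S.rank
    (fun _ _ => rank_ne_of_subtreeGraph_adj hσ)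
    fun _ _ _ hca hcb hc_lt_a hc_lt_b =>
      eq_of_keptEdge_of_keptEdge hS hσ (keptEdge_of_subtreeGraph_adj hσ hca.symm hc_lt_a)
        (keptEdge_of_subtreeGraph_adj hσ hcb.symm hc_lt_b)

end SPGM

theorem spgm_subtree_is_rooted_tree_general {Xvar Zvar : Type} {Xdom : Xvar → ℕ} {Zdom : Zvar → ℕ}
    (S : SPGM Xvar Zvar Xdom Zdom) (hS : S.Valid)
    (σ : S.V → ℕ) (hσ : σ ∈ S.subtrees) :
    (∀ v : S.V, S.Keep σ v → Relation.ReflTransGen (S.keptEdge σ) S.root v) ∧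
      (S.subtreeGraph σ).IsAcyclic ∧
      (∀ c : S.V, S.Keep σ c → c ≠ S.root → ∃! t : S.V, S.keptEdge σ t c) := by
  obtain ⟨hσ, -⟩ := hσ
  refine ⟨fun _ => SPGM.reflTransGen_keptEdge_of_keep, SPGM.subtreeGraph_isAcyclic hS hσ,
    fun c hc hne => ?_⟩
  obtain ⟨t, ht⟩ := SPGM.exists_keptEdge_of_keep hc hne
  exact ⟨t, ht, fun t' ht' => SPGM.eq_of_keptEdge_of_keptEdge hS hσ ht' ht⟩

/-- For every SPGM `S` and every subtree `τ ∈ T(S)` (given by its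
canonical choice function `σ`), the underlying directed graph of `τ` is a rooted tree:
every kept node is connected to the root by kept edges, the underlying undirected graph
of the subtree is acyclic, and every kept node other than the root has exactly one
parent within `τ`. -/
theorem spgm_subtree_is_rooted_tree {Xvar Zvar : Type} {Xdom : Xvar → ℕ} {Zdom : Zvar → ℕ}
    (S : SPGM Xvar Zvar Xdom Zdom) (hS : S.Valid) (hN : S.Normalized)
    (σ : S.V → ℕ) (hσ : σ ∈ S.subtrees) :
    (∀ v : S.V, S.Keep σ v → Relation.ReflTransGen (S.keptEdge σ) S.root v) ∧
      (S.subtreeGraph σ).IsAcyclic ∧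
      (∀ c : S.V, S.Keep σ c → c ≠ S.root → ∃! t : S.V, S.keptEdge σ t c) :=
  spgm_subtree_is_rooted_tree_general S hS σ hσ
end
end

section
/- For every valid SPGM S over (X, Z) there exists a decomposable SPN S' over the variables X ∪ Z such that for every subset Y ⊆ X ∪ Z and every partial assignment y of Y, the SPN evaluation S'(y) equals the SPGM evaluation S(y) computed by message passing. -/
attribute [local instance] Classical.propDecidable

noncomputable section

/-- A (decomposable) sum-product network over variables `Var` with domain sizes `dom`:
indicator leaves, products, and weighted sums, with children indexed by `Fin n`. -/
inductive SPN (Var : Type) (dom : Var → ℕ) : Type where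
  | leaf (v : Var) (i : ℕ) : SPN Var dom
  | prod (n : ℕ) (c : Fin n → SPN Var dom) : SPN Var dom
  | sum (n : ℕ) (w : Fin n → ℝ) (c : Fin n → SPN Var dom) : SPN Var dom

namespace SPN

variable {Var : Type} {dom : Var → ℕ}

/-- The scope of an SPN. -/
def scope : SPN Var dom → Set Var
  | .leaf v _ => {v}
  | .prod _ c => ⋃ k, (c k).scope
  | .sum _ _ c => ⋃ k, (c k).scope

/-- Validity (decomposability): leaves use in-domain values, products have at least one
child and pairwise disjoint child scopes, sums have at least one child, nonnegative
weights and a common child scope. -/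
def Valid : SPN Var dom → Prop
  | .leaf v i => i < dom v
  | .prod n c => 0 < n ∧ (∀ k, (c k).Valid) ∧
      ∀ k k', k ≠ k' → Disjoint ((c k).scope) ((c k').scope)
  | .sum n w c => 0 < n ∧ (∀ k, 0 ≤ w k) ∧ (∀ k, (c k).Valid) ∧
      ∀ k k', (c k).scope = (c k').scope

/-- Evaluation of an SPN at a partial assignment `y`. -/
def eval (y : Var → Option ℕ) : SPN Var dom → ℝ
  | .leaf v i => Indicator y v i
  | .prod n c => ∏ k : Fin n, (c k).eval y
  | .sum n w c => ∑ k : Fin n, w k * (c k).eval y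

end SPN


section Aux

variable {Xvar Zvar : Type} {Xdom : Xvar → ℕ} {Zdom : Zvar → ℕ}

open SPGM

/-- Pairing two SPNs into a binary product. -/
def SPN.pair {Var : Type} {dom : Var → ℕ} (a b : SPN Var dom) : SPN Var dom :=
  SPN.prod 2 (fun k => if k = 0 then a else b)

lemma SPN.pair_scope {Var : Type} {dom : Var → ℕ} (a b : SPN Var dom) :
    (SPN.pair a b).scope = a.scope ∪ b.scope := by
  ext v
  simp only [SPN.pair, SPN.scope, Set.mem_iUnion, Set.mem_union]
  constructor
  · rintro ⟨k, hk⟩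
    fin_cases k <;> simp_all
  · rintro (h | h)
    · exact ⟨0, by simpa using h⟩
    · exact ⟨1, by simpa using h⟩

lemma SPN.pair_eval {Var : Type} {dom : Var → ℕ} (a b : SPN Var dom)
    (y : Var → Option ℕ) : (SPN.pair a b).eval y = a.eval y * b.eval y := by
  simp [SPN.pair, SPN.eval, Fin.prod_univ_two]

lemma SPN.pair_valid {Var : Type} {dom : Var → ℕ} {a b : SPN Var dom}
    (ha : a.Valid) (hb : b.Valid) (hd : Disjoint a.scope b.scope) :
    (SPN.pair a b).Valid := by
  refine ⟨two_pos, fun k => ?_, fun k k' hkk => ?_⟩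
  · fin_cases k <;> simpa [SPN.pair]
  · fin_cases k <;> fin_cases k' <;> simp_all [SPN.pair] <;>
      first
        | exact hd
        | exact hd.symm


lemma SPN.scope_leaf {Var : Type} {dom : Var → ℕ} (v : Var) (i : ℕ) :
    (SPN.leaf v i : SPN Var dom).scope = {v} := rfl

lemma SPN.scope_sum {Var : Type} {dom : Var → ℕ} (n : ℕ) (w : Fin n → ℝ)
    (c : Fin n → SPN Var dom) : (SPN.sum n w c).scope = ⋃ k, (c k).scope := rfl

lemma SPN.scope_prodn {Var : Type} {dom : Var → ℕ} (n : ℕ)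
    (c : Fin n → SPN Var dom) : (SPN.prod n c).scope = ⋃ k, (c k).scope := rfl

lemma SPN.eval_sum {Var : Type} {dom : Var → ℕ} (y : Var → Option ℕ) (n : ℕ)
    (w : Fin n → ℝ) (c : Fin n → SPN Var dom) :
    (SPN.sum n w c).eval y = ∑ k : Fin n, w k * (c k).eval y := rfl

lemma SPN.eval_prodn {Var : Type} {dom : Var → ℕ} (y : Var → Option ℕ) (n : ℕ)
    (c : Fin n → SPN Var dom) :
    (SPN.prod n c).eval y = ∏ k : Fin n, (c k).eval y := rfl

lemma SPN.eval_leaf {Var : Type} {dom : Var → ℕ} (y : Var → Option ℕ) (v : Var)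
    (i : ℕ) : (SPN.leaf v i : SPN Var dom).eval y = Indicator y v i := rfl

lemma list_prod_map {α : Type*} (f : α → ℝ) (l : List α) (d : α) :
    (l.map f).prod = ∏ k : Fin l.length, f (l.getD k d) := by
  induction l with
  | nil => simp
  | cons a t ih =>
    rw [List.map_cons, List.prod_cons]
    simp only [List.length_cons, Fin.prod_univ_succ, List.getD_cons_zero]
    rw [ih]
    simp [Fin.val_succ, List.getD_cons_succ]

lemma list_iUnion_eq {α β : Type*} (f : α → Set β) (l : List α) (d : α) :
    (⋃ c ∈ l, f c) = ⋃ k : Fin l.length, f (l.getD k d) := by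
  ext v
  simp only [Set.mem_iUnion]
  constructor
  · rintro ⟨c, hc, hv⟩
    rcases List.mem_iff_getElem.mp hc with ⟨i, hi, rfl⟩
    exact ⟨⟨i, hi⟩, by simpa [List.getD, List.getElem?_eq_getElem hi] using hv⟩
  · rintro ⟨⟨i, hi⟩, hv⟩
    refine ⟨l[i], List.getElem_mem _, ?_⟩
    simpa [List.getD, List.getElem?_eq_getElem hi] using hv

lemma SPGM.scope_eq' (S : SPGM Xvar Zvar Xdom Zdom) (t : S.V) :
    S.scope t = {v | S.label t = some v} ∪ ⋃ c ∈ S.children t, S.scope c := by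
  ext v
  constructor
  · rintro ⟨u, hreach, hlab⟩
    rcases (Relation.ReflTransGen.cases_head hreach) with rfl | ⟨c, hc, hcu⟩
    · exact Or.inl hlab
    · exact Or.inr (Set.mem_biUnion hc ⟨u, hcu, hlab⟩)
  · rintro (h | h)
    · exact ⟨t, Relation.ReflTransGen.refl, h⟩
    · rcases Set.mem_iUnion₂.mp h with ⟨c, hc, u, hcu, hlab⟩
      exact ⟨u, Relation.ReflTransGen.head hc hcu, hlab⟩

lemma SPGM.scope_vnode (S : SPGM Xvar Zvar Xdom Zdom) {t : S.V} {x : Xvar}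
    (hk : S.kind t = SPGMKind.vnode x) :
    S.scope t = {Sum.inl x} ∪ ⋃ c ∈ S.children t, S.scope c := by
  rw [S.scope_eq' t]
  congr 1
  ext v
  simp [SPGM.label, hk, eq_comm]

lemma SPGM.scope_sumObs (S : SPGM Xvar Zvar Xdom Zdom) {t : S.V} {z : Zvar}
    (hk : S.kind t = SPGMKind.sumObs z) :
    S.scope t = {Sum.inr z} ∪ ⋃ c ∈ S.children t, S.scope c := by
  rw [S.scope_eq' t]
  congr 1
  ext v
  simp [SPGM.label, hk, eq_comm]

lemma SPGM.scope_prod (S : SPGM Xvar Zvar Xdom Zdom) {t : S.V}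
    (hk : S.kind t = SPGMKind.prod) :
    S.scope t = ⋃ c ∈ S.children t, S.scope c := by
  rw [S.scope_eq' t]
  have : {v | S.label t = some v} = (∅ : Set (Xvar ⊕ Zvar)) := by
    ext v; simp [SPGM.label, hk]
  rw [this, Set.empty_union]

lemma SPGM.scope_sumUnobs (S : SPGM Xvar Zvar Xdom Zdom) {t : S.V}
    (hk : S.kind t = SPGMKind.sumUnobs) :
    S.scope t = ⋃ c ∈ S.children t, S.scope c := by
  rw [S.scope_eq' t]
  have : {v | S.label t = some v} = (∅ : Set (Xvar ⊕ Zvar)) := by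
    ext v; simp [SPGM.label, hk]
  rw [this, Set.empty_union]

/-- The SPN encoding the message `μ_{t→s;j}` of the SPGM, with fuel. -/
def toSPN (S : SPGM Xvar Zvar Xdom Zdom) :
    ℕ → S.V → Option S.V → ℕ → SPN (Xvar ⊕ Zvar) (Sum.elim Xdom Zdom)
  | 0, _, _, _ => SPN.prod 0 (fun k => k.elim0)
  | n + 1, t, s, j =>
    match S.kind t with
    | SPGMKind.vnode x =>
        SPN.sum (Xdom x)
          (fun k => match s with
            | some s' => S.Pcond t s' k j
            | none => S.Punary t k)
          (fun k => match S.children t with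
            | [] => SPN.leaf (Sum.inl x) k
            | c :: _ => SPN.pair (SPN.leaf (Sum.inl x) k) (toSPN S n c (some t) k))
    | SPGMKind.prod =>
        SPN.prod (S.children t).length
          (fun k => toSPN S n ((S.children t).getD k t) s j)
    | SPGMKind.sumObs z =>
        SPN.sum (S.children t).length (fun k => S.Q t k)
          (fun k => SPN.pair (SPN.leaf (Sum.inr z) k)
            (toSPN S n ((S.children t).getD k t) s j))
    | SPGMKind.sumUnobs =>
        SPN.sum (S.children t).length (fun k => S.W t k)
          (fun k => toSPN S n ((S.children t).getD k t) s j)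

lemma getD_mem {α : Type*} (l : List α) (d : α) (k : Fin l.length) :
    l.getD k d ∈ l := by
  rw [List.getD_eq_getElem _ _ k.isLt]
  exact List.getElem_mem _

lemma pairwise_getD {α : Type*} {R : α → α → Prop} (hsym : ∀ a b, R a b → R b a)
    {l : List α} (h : l.Pairwise R) (d : α) (k k' : Fin l.length) (hkk : k ≠ k') :
    R (l.getD k d) (l.getD k' d) := by
  rw [List.getD_eq_getElem _ _ k.isLt, List.getD_eq_getElem _ _ k'.isLt]
  rcases lt_or_gt_of_ne (Fin.val_ne_of_ne hkk) with h' | h'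
  · exact List.pairwise_iff_getElem.mp h _ _ _ _ h'
  · exact hsym _ _ (List.pairwise_iff_getElem.mp h _ _ _ _ h')

lemma toSPN_scope (S : SPGM Xvar Zvar Xdom Zdom) (hS : S.Valid) :
    ∀ (n : ℕ) (t : S.V) (s : Option S.V) (j : ℕ), S.rank t < n →
      (toSPN S n t s j).scope = S.scope t := by
  intro n
  induction n with
  | zero => intro t s j h; omega
  | succ n ih =>
    intro t s j hn
    have hchild : ∀ c ∈ S.children t, S.rank c < n := fun c hc =>
      lt_of_lt_of_le (S.rank_lt t c hc) (Nat.lt_succ_iff.mp hn)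
    cases hk : S.kind t with
    | vnode x =>
      have hx : 0 < Xdom x := hS.xdom_pos x
      haveI hne : Nonempty (Fin (Xdom x)) := ⟨⟨0, hx⟩⟩
      have hlen : (S.children t).length ≤ 1 := hS.vnode_child t ⟨x, hk⟩
      simp only [toSPN, hk]
      rw [S.scope_vnode hk]
      rcases hcl : S.children t with _ | ⟨c, rest⟩
      · rw [SPN.scope_sum]
        simp only [SPN.scope_leaf]
        rw [Set.iUnion_const]
        simp
      · have hrest : rest = [] := by
          rw [hcl] at hlen
          simp only [List.length_cons] at hlen
          exact List.length_eq_zero_iff.mp (by omega)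
        subst hrest
        have hc : S.rank c < n := hchild c (by rw [hcl]; simp)
        have hpp : ∀ k : Fin (Xdom x),
            (SPN.pair (SPN.leaf (Sum.inl x) (k : ℕ))
              (toSPN S n c (some t) (k : ℕ))).scope
              = {Sum.inl x} ∪ S.scope c := by
          intro k
          rw [SPN.pair_scope, ih c (some t) (k : ℕ) hc, SPN.scope_leaf]
        rw [SPN.scope_sum]
        simp only [hpp]
        rw [Set.iUnion_const]
        simp
    | prod =>
      simp only [toSPN, hk]
      rw [S.scope_prod hk, list_iUnion_eq S.scope (S.children t) t, SPN.scope_prodn]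
      exact Set.iUnion_congr fun k => ih _ s j (hchild _ (getD_mem _ _ _))
    | sumObs z =>
      have hne : (S.children t) ≠ [] := hS.sum_child t (Or.inl ⟨z, hk⟩)
      have hpos : 0 < (S.children t).length := List.length_pos_iff.mpr hne
      haveI : Nonempty (Fin (S.children t).length) := ⟨⟨0, hpos⟩⟩
      simp only [toSPN, hk]
      rw [S.scope_sumObs hk, list_iUnion_eq S.scope (S.children t) t]
      have heq : ∀ k : Fin (S.children t).length,
          (SPN.pair (SPN.leaf (Sum.inr z) (k : ℕ))
            (toSPN S n ((S.children t).getD k t) s j)).scope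
            = {Sum.inr z} ∪ S.scope ((S.children t).getD k t) := by
        intro k
        rw [SPN.pair_scope, ih _ s j (hchild _ (getD_mem _ _ _)), SPN.scope_leaf]
      rw [SPN.scope_sum]
      simp only [heq]
      rw [Set.iUnion_union_distrib, Set.iUnion_const]
    | sumUnobs =>
      simp only [toSPN, hk]
      rw [S.scope_sumUnobs hk, list_iUnion_eq S.scope (S.children t) t, SPN.scope_sum]
      exact Set.iUnion_congr fun k => ih _ s j (hchild _ (getD_mem _ _ _))

lemma toSPN_valid (S : SPGM Xvar Zvar Xdom Zdom) (hS : S.Valid) :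
    ∀ (n : ℕ) (t : S.V) (s : Option S.V) (j : ℕ), S.rank t < n →
      (toSPN S n t s j).Valid := by
  intro n
  induction n with
  | zero => intro t s j h; omega
  | succ n ih =>
    intro t s j hn
    have hchild : ∀ c ∈ S.children t, S.rank c < n := fun c hc =>
      lt_of_lt_of_le (S.rank_lt t c hc) (Nat.lt_succ_iff.mp hn)
    cases hk : S.kind t with
    | vnode x =>
      have hx : 0 < Xdom x := hS.xdom_pos x
      simp only [toSPN, hk]
      refine ⟨hx, fun k => ?_, fun k => ?_, fun k k' => ?_⟩
      · rcases s with _ | s'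
        · exact hS.Punary_nonneg t k
        · exact hS.Pcond_nonneg t s' k j
      · rcases hcl : S.children t with _ | ⟨c, rest⟩
        · exact k.isLt
        · have hc : S.rank c < n := hchild c (by rw [hcl]; simp)
          refine SPN.pair_valid k.isLt (ih c (some t) (k : ℕ) hc) ?_
          rw [toSPN_scope S hS n c (some t) (k : ℕ) hc, SPN.scope_leaf]
          have hx' : Sum.inl x ∉ S.scope c :=
            hS.vnode_scope t x c hk (by rw [hcl]; simp)
          exact Set.disjoint_singleton_left.mpr hx'
      · rcases hcl : S.children t with _ | ⟨c, rest⟩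
        · rw [SPN.scope_leaf, SPN.scope_leaf]
        · have hc : S.rank c < n := hchild c (by rw [hcl]; simp)
          rw [SPN.pair_scope, SPN.pair_scope, SPN.scope_leaf, SPN.scope_leaf,
            toSPN_scope S hS n c (some t) (k : ℕ) hc,
            toSPN_scope S hS n c (some t) (k' : ℕ) hc]
    | prod =>
      have hne : (S.children t) ≠ [] := hS.prod_child t hk
      have hpos : 0 < (S.children t).length := List.length_pos_iff.mpr hne
      simp only [toSPN, hk]
      refine ⟨hpos, fun k => ih _ s j (hchild _ (getD_mem _ _ _)), fun k k' hkk => ?_⟩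
      rw [toSPN_scope S hS n ((S.children t).getD k t) s j (hchild _ (getD_mem _ _ _)),
        toSPN_scope S hS n ((S.children t).getD k' t) s j (hchild _ (getD_mem _ _ _))]
      exact pairwise_getD (fun a b h => h.symm) (hS.prod_scope t hk) t k k' hkk
    | sumObs z =>
      have hne : (S.children t) ≠ [] := hS.sum_child t (Or.inl ⟨z, hk⟩)
      have hpos : 0 < (S.children t).length := List.length_pos_iff.mpr hne
      have hcard : (S.children t).length = Zdom z := hS.sumObs_card t z hk
      simp only [toSPN, hk]
      refine ⟨hpos, fun k => hS.Q_nonneg t k, fun k => ?_, fun k k' => ?_⟩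
      · refine SPN.pair_valid ?_ (ih _ s j (hchild _ (getD_mem _ _ _))) ?_
        · show (k : ℕ) < Zdom z
          exact hcard ▸ k.isLt
        · rw [toSPN_scope S hS n ((S.children t).getD k t) s j
            (hchild _ (getD_mem _ _ _)), SPN.scope_leaf]
          exact Set.disjoint_singleton_left.mpr
            (hS.sumObs_scope t z _ hk (getD_mem _ _ _))
      · rw [SPN.pair_scope, SPN.pair_scope, SPN.scope_leaf, SPN.scope_leaf,
          toSPN_scope S hS n ((S.children t).getD k t) s j (hchild _ (getD_mem _ _ _)),
          toSPN_scope S hS n ((S.children t).getD k' t) s j (hchild _ (getD_mem _ _ _)),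
          hS.sum_scope t (Or.inl ⟨z, hk⟩) _ (getD_mem _ _ k) _ (getD_mem _ _ k')]
    | sumUnobs =>
      have hne : (S.children t) ≠ [] := hS.sum_child t (Or.inr hk)
      have hpos : 0 < (S.children t).length := List.length_pos_iff.mpr hne
      simp only [toSPN, hk]
      refine ⟨hpos, fun k => hS.W_nonneg t k,
        fun k => ih _ s j (hchild _ (getD_mem _ _ _)), fun k k' => ?_⟩
      rw [toSPN_scope S hS n ((S.children t).getD k t) s j (hchild _ (getD_mem _ _ _)),
        toSPN_scope S hS n ((S.children t).getD k' t) s j (hchild _ (getD_mem _ _ _))]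
      exact hS.sum_scope t (Or.inr hk) _ (getD_mem _ _ k) _ (getD_mem _ _ k')

lemma toSPN_eval (S : SPGM Xvar Zvar Xdom Zdom) (y : (Xvar ⊕ Zvar) → Option ℕ) :
    ∀ (n : ℕ) (t : S.V) (s : Option S.V) (j : ℕ), S.rank t < n →
      (toSPN S n t s j).eval y = SPGM.msgAux S y n t s j := by
  intro n
  induction n with
  | zero => intro t s j h; omega
  | succ n ih =>
    intro t s j hn
    have hchild : ∀ c ∈ S.children t, S.rank c < n := fun c hc =>
      lt_of_lt_of_le (S.rank_lt t c hc) (Nat.lt_succ_iff.mp hn)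
    cases hk : S.kind t with
    | vnode x =>
      simp only [toSPN, SPGM.msgAux, hk]
      rw [SPN.eval_sum, ← Fin.sum_univ_eq_sum_range]
      refine Finset.sum_congr rfl fun k _ => ?_
      rcases hcl : S.children t with _ | ⟨c, rest⟩
      · rw [SPN.eval_leaf]
        ring
      · have hc : S.rank c < n := hchild c (by rw [hcl]; simp)
        rw [SPN.pair_eval, ih c (some t) (k : ℕ) hc, SPN.eval_leaf]
        ring
    | prod =>
      simp only [toSPN, SPGM.msgAux, hk]
      rw [SPN.eval_prodn, list_prod_map (fun c => SPGM.msgAux S y n c s j) (S.children t) t]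
      exact Finset.prod_congr rfl fun k _ => ih _ s j (hchild _ (getD_mem _ _ _))
    | sumObs z =>
      simp only [toSPN, SPGM.msgAux, hk]
      rw [SPN.eval_sum, ← Fin.sum_univ_eq_sum_range]
      refine Finset.sum_congr rfl fun k _ => ?_
      rw [SPN.pair_eval, ih _ s j (hchild _ (getD_mem _ _ _)), SPN.eval_leaf]
      ring
    | sumUnobs =>
      simp only [toSPN, SPGM.msgAux, hk]
      rw [SPN.eval_sum, ← Fin.sum_univ_eq_sum_range]
      exact Finset.sum_congr rfl fun k _ => by
        rw [ih _ s j (hchild _ (getD_mem _ _ _))]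

end Aux

/-- For every valid SPGM `S` over `(X, Z)` there exists a decomposable
SPN `S'` over the variables `X ∪ Z` such that for every partial assignment `y` of any
subset of the variables, the SPN evaluation `S'(y)` equals the SPGM evaluation `S(y)`
computed by message passing. -/
theorem spgm_encodes_spn {Xvar Zvar : Type} {Xdom : Xvar → ℕ} {Zdom : Zvar → ℕ}
    (S : SPGM Xvar Zvar Xdom Zdom) (hS : S.Valid) (hN : S.Normalized) :
    ∃ N : SPN (Xvar ⊕ Zvar) (Sum.elim Xdom Zdom),
      N.Valid ∧ ∀ y : (Xvar ⊕ Zvar) → Option ℕ, N.eval y = S.eval y := by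
  refine ⟨toSPN S (S.rank S.root + 1) S.root none 0,
    toSPN_valid S hS _ _ _ _ (Nat.lt_succ_self _), fun y => ?_⟩
  rw [SPGM.eval, SPGM.msg]
  exact toSPN_eval S y _ _ _ _ (Nat.lt_succ_self _)
end
end

section
/- Let S be a valid SPGM, let t be a node of S with a Vparent s (or with no Vparent, in which case t sends a message to a fictitious root), and let X^t and Z^t denote the X-scope and Z-scope of t. If for every message sent by a child of t occurring in the computation of the messages of t there exists a decomposable SPN over the corresponding scopes whose evaluation function (as a function of partial assignments) equals that message, then for every j in the domain of X_s there exists a decomposable SPN over the variables X^t ∪ Z^t whose evaluation function equals the message μ_{t→s;j} (respectively the root message of t). -/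
attribute [local instance] Classical.propDecidable

noncomputable section

/-!
A message `μ_{t→s;j}` is one weighted sum or product of the messages of the children of `t`
(`SPGM.msgStep`), possibly multiplied by indicators of the label of `t`. Functions computed by
decomposable SPNs are closed under nonnegatively weighted sums over a common scope and under
products over disjoint scopes, and an indicator is a leaf. The validity of the SPGM supplies
exactly these scope conditions: the children of a sum node share their scope, those of a product
node have disjoint scopes, and the label of a node does not occur below it.
-/

def SPNRepresentable {Var : Type} (dom : Var → ℕ) (A : Set Var) (f : (Var → Option ℕ) → ℝ) :
    Prop :=
  ∃ N : SPN Var dom, N.Valid ∧ N.scope = A ∧ ∀ y, N.eval y = f y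

namespace SPNRepresentable

variable {Var : Type} {dom : Var → ℕ}

theorem indicator {v : Var} {i : ℕ} (hi : i < dom v) :
    SPNRepresentable dom {v} fun y => Indicator y v i :=
  ⟨.leaf v i, hi, rfl, fun _ => rfl⟩

theorem mul {A B : Set Var} {f g : (Var → Option ℕ) → ℝ}
    (hf : SPNRepresentable dom A f) (hg : SPNRepresentable dom B g) (hAB : Disjoint A B) :
    SPNRepresentable dom (A ∪ B) fun y => f y * g y := by
  obtain ⟨M, hMv, rfl, hMe⟩ := hf
  obtain ⟨N, hNv, rfl, hNe⟩ := hg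
  refine ⟨.prod 2 ![M, N], ⟨two_pos, Fin.forall_fin_two.2 ⟨hMv, hNv⟩, ?_⟩, ?_, ?_⟩
  · simp [Fin.forall_fin_two, hAB, hAB.symm]
  · ext v
    simp [SPN.scope, Fin.exists_fin_two]
  · simp [SPN.eval, hMe, hNe]

theorem sum_range {A : Set Var} {n : ℕ} (hn : 0 < n) {w : ℕ → ℝ} (hw : ∀ k < n, 0 ≤ w k)
    {f : ℕ → (Var → Option ℕ) → ℝ} (hf : ∀ k < n, SPNRepresentable dom A (f k)) :
    SPNRepresentable dom A fun y => ∑ k ∈ Finset.range n, w k * f k y := by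
  choose N hNv hNs hNe using fun k : Fin n => hf k k.2
  have : Nonempty (Fin n) := ⟨⟨0, hn⟩⟩
  refine ⟨.sum n (fun k => w k) N,
    ⟨hn, fun k => hw k k.2, hNv, fun k k' => (hNs k).trans (hNs k').symm⟩, ?_, fun y => ?_⟩
  · simp only [SPN.scope, hNs, Set.iUnion_const]
  · simp only [SPN.eval, hNe]
    exact Fin.sum_univ_eq_sum_range (fun k => w k * f k y) n

theorem list_prod {ι : Type*} {A : ι → Set Var} {f : ι → (Var → Option ℕ) → ℝ} :
    ∀ {l : List ι}, l ≠ [] → l.Pairwise (fun i i' => Disjoint (A i) (A i')) →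
      (∀ i ∈ l, SPNRepresentable dom (A i) (f i)) →
      SPNRepresentable dom (⋃ i ∈ l, A i) fun y => (l.map fun i => f i y).prod
  | [a], _, _, hf => by simpa using hf a (List.mem_singleton_self a)
  | a :: b :: l, _, hA, hf => by
    have hrest := list_prod (List.cons_ne_nil b l) hA.of_cons
      fun i hi => hf i (List.mem_cons_of_mem a hi)
    have hdisj : Disjoint (A a) (⋃ i ∈ b :: l, A i) :=
      Set.disjoint_iUnion₂_right.2 fun i hi => List.rel_of_pairwise_cons hA hi
    simpa [Set.iUnion_iUnion_eq_or_left] using (hf a List.mem_cons_self).mul hrest hdisj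

theorem sum_range_mul_indicator {v : Var} {n : ℕ} (hn : 0 < n) (hndom : n ≤ dom v)
    {w : ℕ → ℝ} (hw : ∀ k < n, 0 ≤ w k) :
    SPNRepresentable dom {v} fun y => ∑ k ∈ Finset.range n, w k * Indicator y v k :=
  sum_range hn hw fun _ hk => indicator (hk.trans_le hndom)

theorem sum_range_mul_indicator_mul {v : Var} {B : Set Var} {n : ℕ} (hn : 0 < n)
    (hndom : n ≤ dom v) {w : ℕ → ℝ} (hw : ∀ k < n, 0 ≤ w k) {f : ℕ → (Var → Option ℕ) → ℝ}
    (hf : ∀ k < n, SPNRepresentable dom B (f k)) (hvB : v ∉ B) :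
    SPNRepresentable dom ({v} ∪ B) fun y =>
      ∑ k ∈ Finset.range n, w k * Indicator y v k * f k y := by
  simpa only [mul_assoc] using sum_range hn hw fun k hk =>
    (indicator (hk.trans_le hndom)).mul (hf k hk) (Set.disjoint_singleton_left.2 hvB)

end SPNRepresentable

namespace SPGM

variable {Xvar Zvar : Type} {Xdom : Xvar → ℕ} {Zdom : Zvar → ℕ}
  (S : SPGM Xvar Zvar Xdom Zdom)

theorem scope_eq_union (t : S.V) :
    S.scope t = {v | S.label t = some v} ∪ ⋃ c ∈ S.children t, S.scope c := by
  ext v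
  simp only [scope, Set.mem_union, Set.mem_ofPred_eq, Set.mem_iUnion, exists_prop]
  constructor
  · rintro ⟨u, hr, hl⟩
    rcases Relation.ReflTransGen.cases_head hr with rfl | ⟨c, hc, hr'⟩
    · exact Or.inl hl
    · exact Or.inr ⟨c, hc, u, hr', hl⟩
  · rintro (hl | ⟨c, hc, u, hr, hl⟩)
    · exact ⟨t, .refl, hl⟩
    · exact ⟨u, .head hc hr, hl⟩

theorem scope_of_label_eq_none {t : S.V} (h : S.label t = none) :
    S.scope t = ⋃ c ∈ S.children t, S.scope c := by
  simp [S.scope_eq_union t, h]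

theorem scope_of_label_eq_some {t : S.V} {v : Xvar ⊕ Zvar} (h : S.label t = some v) :
    S.scope t = {v} ∪ ⋃ c ∈ S.children t, S.scope c := by
  simp [S.scope_eq_union t, h]

theorem biUnion_scope_children {t c : S.V} (hS : S.Valid) (hsum : S.isSum t)
    (hc : c ∈ S.children t) : ⋃ c' ∈ S.children t, S.scope c' = S.scope c :=
  (Set.iUnion₂_subset fun c' hc' => (hS.sum_scope t hsum c' hc' c hc).le).antisymm
    (Set.subset_biUnion_of_mem (u := S.scope) hc)

theorem getD_mem_children {t : S.V} {k : ℕ} (hk : k < (S.children t).length) :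
    (S.children t).getD k t ∈ S.children t := by
  rw [List.getD_eq_getElem _ _ hk]
  exact List.getElem_mem hk

/-- The weight `P_{s,t}(k | j)`, or `P_t(k)` when `s` is the fictitious root. -/
def vnodeWeight (t : S.V) (s : Option S.V) (j k : ℕ) : ℝ :=
  match s with
  | some s' => S.Pcond t s' k j
  | none => S.Punary t k

theorem vnodeWeight_nonneg (hS : S.Valid) (t : S.V) (s : Option S.V) (j k : ℕ) :
    0 ≤ S.vnodeWeight t s j k := by
  cases s
  exacts [hS.Punary_nonneg t k, hS.Pcond_nonneg t _ k j]

/-- One round of message passing at `t`, where `F c s' k` stands for the message `μ_{c→s';k}`. -/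
def msgStep (y : (Xvar ⊕ Zvar) → Option ℕ) (F : S.V → Option S.V → ℕ → ℝ) (t : S.V)
    (s : Option S.V) (j : ℕ) : ℝ :=
  match S.kind t with
  | .vnode x =>
      ∑ k ∈ Finset.range (Xdom x), S.vnodeWeight t s j k * Indicator y (.inl x) k *
        (match S.children t with
          | [] => 1
          | c :: _ => F c (some t) k)
  | .prod => ((S.children t).map fun c => F c s j).prod
  | .sumObs z =>
      ∑ k ∈ Finset.range (S.children t).length,
        Indicator y (.inr z) k * S.Q t k * F ((S.children t).getD k t) s j
  | .sumUnobs =>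
      ∑ k ∈ Finset.range (S.children t).length, S.W t k * F ((S.children t).getD k t) s j

variable (y : (Xvar ⊕ Zvar) → Option ℕ)

theorem msgAux_succ (n : ℕ) (t : S.V) (s : Option S.V) (j : ℕ) :
    S.msgAux y (n + 1) t s j = S.msgStep y (S.msgAux y n) t s j :=
  rfl

theorem msgStep_congr {F G : S.V → Option S.V → ℕ → ℝ} {t : S.V}
    (h : ∀ c ∈ S.children t, F c = G c) (s : Option S.V) (j : ℕ) :
    S.msgStep y F t s j = S.msgStep y G t s j := by
  unfold msgStep
  split
  · rcases hcl : S.children t with _ | ⟨c, _⟩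
    · rfl
    · simp only [h c (by simp [hcl])]
  · rw [List.map_congr_left fun c hc => congrFun₂ (h c hc) s j]
  all_goals
    refine Finset.sum_congr rfl fun k hk => ?_
    rw [h _ (S.getD_mem_children (Finset.mem_range.1 hk))]

theorem msgAux_eq_msg {n : ℕ} {t : S.V} (hn : S.rank t < n) : S.msgAux y n t = S.msg y t := by
  induction n using Nat.strong_induction_on generalizing t with
  | _ n ih =>
    obtain ⟨m, rfl⟩ := Nat.exists_eq_add_one_of_ne_zero (Nat.ne_zero_of_lt hn)
    funext s j
    rw [msg, msgAux_succ, msgAux_succ]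
    refine S.msgStep_congr y (fun c hc => ?_) s j
    have hct := S.rank_lt t c hc
    exact (ih m (by omega) (by omega)).trans (ih (S.rank t) hn hct).symm

theorem msg_eq_msgStep (t : S.V) (s : Option S.V) (j : ℕ) :
    S.msg y t s j = S.msgStep y (S.msg y) t s j :=
  S.msgStep_congr y (fun c hc => S.msgAux_eq_msg y (S.rank_lt t c hc)) s j

end SPGM

namespace SPGM

variable {Xvar Zvar : Type} {Xdom : Xvar → ℕ} {Zdom : Zvar → ℕ}
  {S : SPGM Xvar Zvar Xdom Zdom} {t : S.V} {s : Option S.V} {j : ℕ}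
  {F : ((Xvar ⊕ Zvar) → Option ℕ) → S.V → Option S.V → ℕ → ℝ}

open SPNRepresentable

theorem representable_getD_children {dom : Xvar ⊕ Zvar → ℕ}
    {G : S.V → ((Xvar ⊕ Zvar) → Option ℕ) → ℝ} {c₀ : S.V} (hS : S.Valid) (hsum : S.isSum t)
    (hc₀ : c₀ ∈ S.children t) (hG : ∀ c ∈ S.children t, SPNRepresentable dom (S.scope c) (G c))
    (k : ℕ) (hk : k < (S.children t).length) :
    SPNRepresentable dom (S.scope c₀) (G ((S.children t).getD k t)) := by
  have hmem := S.getD_mem_children hk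
  rw [← hS.sum_scope t hsum _ hmem _ hc₀]
  exact hG _ hmem

theorem representable_msgStep_of_kind_vnode (hS : S.Valid) {x : Xvar}
    (hk : S.kind t = .vnode x)
    (hF : ∀ c ∈ S.children t, ∀ k < Xdom x,
      SPNRepresentable (Sum.elim Xdom Zdom) (S.scope c) fun y => F y c (some t) k) :
    SPNRepresentable (Sum.elim Xdom Zdom) (S.scope t) fun y => S.msgStep y (F y) t s j := by
  have hw k (_ : k < Xdom x) := S.vnodeWeight_nonneg hS t s j k
  rw [S.scope_of_label_eq_some (v := .inl x) (by rw [label, hk])]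
  simp only [msgStep, hk]
  rcases hcl : S.children t with _ | ⟨c, rest⟩
  · simpa using sum_range_mul_indicator (v := Sum.inl x) (hS.xdom_pos x) le_rfl hw
  · obtain rfl : rest = [] := by
      simpa [hcl] using hS.vnode_child t ⟨x, hk⟩
    have hc : c ∈ S.children t := by simp [hcl]
    simpa using sum_range_mul_indicator_mul (v := Sum.inl x) (hS.xdom_pos x) le_rfl hw (hF c hc)
      (hS.vnode_scope t x c hk hc)

theorem representable_msgStep_of_kind_prod (hS : S.Valid) (hk : S.kind t = .prod)
    (hF : ∀ c ∈ S.children t,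
      SPNRepresentable (Sum.elim Xdom Zdom) (S.scope c) fun y => F y c s j) :
    SPNRepresentable (Sum.elim Xdom Zdom) (S.scope t) fun y => S.msgStep y (F y) t s j := by
  rw [S.scope_of_label_eq_none (by rw [label, hk])]
  simp only [msgStep, hk]
  exact list_prod (f := fun c y => F y c s j) (hS.prod_child t hk) (hS.prod_scope t hk) hF

theorem representable_msgStep_of_kind_sumObs (hS : S.Valid) {z : Zvar}
    (hk : S.kind t = .sumObs z)
    (hF : ∀ c ∈ S.children t,
      SPNRepresentable (Sum.elim Xdom Zdom) (S.scope c) fun y => F y c s j) :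
    SPNRepresentable (Sum.elim Xdom Zdom) (S.scope t) fun y => S.msgStep y (F y) t s j := by
  have hsum : S.isSum t := .inl ⟨z, hk⟩
  obtain ⟨c₀, hc₀⟩ := List.exists_mem_of_ne_nil _ (hS.sum_child t hsum)
  rw [S.scope_of_label_eq_some (v := .inr z) (by rw [label, hk]),
    S.biUnion_scope_children hS hsum hc₀]
  simp only [msgStep, hk, mul_comm (Indicator _ _ _) (S.Q t _)]
  exact sum_range_mul_indicator_mul (v := Sum.inr z) (List.length_pos_of_mem hc₀)
    (hS.sumObs_card t z hk).le (fun k _ => hS.Q_nonneg t k)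
    (representable_getD_children hS hsum hc₀ hF) (hS.sumObs_scope t z c₀ hk hc₀)

theorem representable_msgStep_of_kind_sumUnobs (hS : S.Valid) (hk : S.kind t = .sumUnobs)
    (hF : ∀ c ∈ S.children t,
      SPNRepresentable (Sum.elim Xdom Zdom) (S.scope c) fun y => F y c s j) :
    SPNRepresentable (Sum.elim Xdom Zdom) (S.scope t) fun y => S.msgStep y (F y) t s j := by
  have hsum : S.isSum t := .inr hk
  obtain ⟨c₀, hc₀⟩ := List.exists_mem_of_ne_nil _ (hS.sum_child t hsum)
  rw [S.scope_of_label_eq_none (by rw [label, hk]), S.biUnion_scope_children hS hsum hc₀]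
  simp only [msgStep, hk]
  exact sum_range (List.length_pos_of_mem hc₀) (fun k _ => hS.W_nonneg t k)
    (representable_getD_children hS hsum hc₀ hF)

end SPGM

theorem spgm_message_is_spn_general {Xvar Zvar : Type} {Xdom : Xvar → ℕ} {Zdom : Zvar → ℕ}
    (S : SPGM Xvar Zvar Xdom Zdom) (hS : S.Valid)
    (t : S.V) (s : Option S.V) (j : ℕ)
    (hchild : ∀ c ∈ S.children t,
      (¬ S.isVnode t →
        ∃ N : SPN (Xvar ⊕ Zvar) (Sum.elim Xdom Zdom),
          N.Valid ∧ N.scope = S.scope c ∧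
            ∀ y : (Xvar ⊕ Zvar) → Option ℕ, N.eval y = S.msg y c s j) ∧
      (S.isVnode t → ∀ k < S.domOf t,
        ∃ N : SPN (Xvar ⊕ Zvar) (Sum.elim Xdom Zdom),
          N.Valid ∧ N.scope = S.scope c ∧
            ∀ y : (Xvar ⊕ Zvar) → Option ℕ, N.eval y = S.msg y c (some t) k)) :
    ∃ N : SPN (Xvar ⊕ Zvar) (Sum.elim Xdom Zdom),
      N.Valid ∧ N.scope = S.scope t ∧
        ∀ y : (Xvar ⊕ Zvar) → Option ℕ, N.eval y = S.msg y t s j := by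
  change SPNRepresentable _ _ _
  rw [funext fun y => S.msg_eq_msgStep y t s j]
  rcases hk : S.kind t with x | _ | z | _
  · refine SPGM.representable_msgStep_of_kind_vnode hS hk fun c hc k hkx => ?_
    exact (hchild c hc).2 ⟨x, hk⟩ k (by simpa [SPGM.domOf, hk] using hkx)
  all_goals
    have hV : ¬ S.isVnode t := by simp [SPGM.isVnode, hk]
  · exact SPGM.representable_msgStep_of_kind_prod hS hk fun c hc => (hchild c hc).1 hV
  · exact SPGM.representable_msgStep_of_kind_sumObs hS hk fun c hc => (hchild c hc).1 hV
  · exact SPGM.representable_msgStep_of_kind_sumUnobs hS hk fun c hc => (hchild c hc).1 hV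

/-- inductive step of the encoding of SPGM messages as SPNs.
Let `S` be a valid SPGM, `t` a node and `s` either a Vparent of `t` together with a state
`j` in the domain of its variable, or the fictitious root (`s = none`, `j = 0`) when `t`
has no Vparent.  If every message sent by a child of `t` occurring in the computation of
the messages of `t` (the messages `μ_{c→s;j}` for the children `c` when `t` is a sum or
product node, and the messages `μ_{c→t;k}` for `k` in the domain of `X_t` when `t` is a
Vnode) is, as a function of partial assignments, the evaluation function of some
decomposable SPN over the scope of `c`, then the message `μ_{t→s;j}` is the evaluation
function of some decomposable SPN over `X^t ∪ Z^t`, the scope of `t`. -/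
theorem spgm_message_is_spn {Xvar Zvar : Type} {Xdom : Xvar → ℕ} {Zdom : Zvar → ℕ}
    (S : SPGM Xvar Zvar Xdom Zdom) (hS : S.Valid) (hN : S.Normalized)
    (t : S.V) (s : Option S.V) (j : ℕ)
    (hsj : match s with
      | some s' => S.vparent s' t ∧ j < S.domOf s'
      | none => (¬ ∃ s' : S.V, S.vparent s' t) ∧ j = 0)
    (hchild : ∀ c ∈ S.children t,
      (¬ S.isVnode t →
        ∃ N : SPN (Xvar ⊕ Zvar) (Sum.elim Xdom Zdom),
          N.Valid ∧ N.scope = S.scope c ∧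
            ∀ y : (Xvar ⊕ Zvar) → Option ℕ, N.eval y = S.msg y c s j) ∧
      (S.isVnode t → ∀ k < S.domOf t,
        ∃ N : SPN (Xvar ⊕ Zvar) (Sum.elim Xdom Zdom),
          N.Valid ∧ N.scope = S.scope c ∧
            ∀ y : (Xvar ⊕ Zvar) → Option ℕ, N.eval y = S.msg y c (some t) k)) :
    ∃ N : SPN (Xvar ⊕ Zvar) (Sum.elim Xdom Zdom),
      N.Valid ∧ N.scope = S.scope t ∧
        ∀ y : (Xvar ⊕ Zvar) → Option ℕ, N.eval y = S.msg y t s j :=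
  spgm_message_is_spn_general S hS t s j hchild
end
end

section
/- Let x_1, …, x_N be data points, let P_1, …, P_K : D → ℝ be strictly positive functions and λ_1, …, λ_K strictly positive weights with ∑_k λ_k = 1. Define γ_k(i) = λ_k P_k(x_i) / ∑_{k'} λ_{k'} P_{k'}(x_i), Γ_k = ∑_{i=1}^N γ_k(i), w_i^k = γ_k(i)/Γ_k, and updated weights λ̄_k = Γ_k / N. Suppose the updated components P̄_1, …, P̄_K : D → ℝ are strictly positive and satisfy the partial M-step condition ∑_{i=1}^N w_i^k ln P̄_k(x_i) ≥ ∑_{i=1}^N w_i^k ln P_k(x_i) for every k. Then the log-likelihood does not decrease: ∑_{i=1}^N ln(∑_{k=1}^K λ̄_k P̄_k(x_i)) ≥ ∑_{i=1}^N ln(∑_{k=1}^K λ_k P_k(x_i)). In particular, each iteration of the EM algorithm for mixtures in which a component update is rejected whenever its weighted log-likelihood would decrease does not decrease the training log-likelihood. -/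
open Finset

lemma jensen_log {K : ℕ} (wt y : Fin K → ℝ) (hw : ∀ k, 0 ≤ wt k)
    (hw1 : ∑ k, wt k = 1) (hy : ∀ k, 0 < y k) :
    ∑ k, wt k * Real.log (y k) ≤ Real.log (∑ k, wt k * y k) := by
  have := (StrictConcaveOn.concaveOn strictConcaveOn_log_Ioi).le_map_sum
    (t := Finset.univ) (w := wt) (p := y) (fun k _ => hw k) hw1
    (fun k _ => Set.mem_Ioi.2 (hy k))
  simpa using this

/-- EM with rejected component updates does not decrease the
log-likelihood.  Let `x_1, …, x_N` be data points, `P_1, …, P_K : D → ℝ` strictly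
positive mixture components and `λ_1, …, λ_K` strictly positive weights summing to `1`.
Define the EM quantities `γ_k(i) = λ_k P_k(x_i) / ∑_{k'} λ_{k'} P_{k'}(x_i)`,
`Γ_k = ∑_i γ_k(i)`, `w_i^k = γ_k(i) / Γ_k` and the updated weights `λ̄_k = Γ_k / N`.  If
the updated components `P̄_k` are strictly positive and satisfy the partial M-step
condition `∑_i w_i^k ln P̄_k(x_i) ≥ ∑_i w_i^k ln P_k(x_i)` for every `k`, then the
log-likelihood does not decrease. -/
theorem em_partial_mstep_log_likelihood_nondecreasing {D : Type} (N K : ℕ)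
    (x : Fin N → D) (P Pbar : Fin K → D → ℝ) (lam : Fin K → ℝ)
    (hP : ∀ k d, 0 < P k d) (hPbar : ∀ k d, 0 < Pbar k d)
    (hlam : ∀ k, 0 < lam k) (hlam1 : ∑ k, lam k = 1)
    (γ : Fin K → Fin N → ℝ)
    (hγ : ∀ k i, γ k i = lam k * P k (x i) / ∑ k' : Fin K, lam k' * P k' (x i))
    (Γ : Fin K → ℝ) (hΓ : ∀ k, Γ k = ∑ i, γ k i)
    (w : Fin K → Fin N → ℝ) (hw : ∀ k i, w k i = γ k i / Γ k)
    (lamb : Fin K → ℝ) (hlamb : ∀ k, lamb k = Γ k / (N : ℝ))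
    (hM : ∀ k, ∑ i, w k i * Real.log (P k (x i)) ≤ ∑ i, w k i * Real.log (Pbar k (x i))) :
    ∑ i, Real.log (∑ k, lam k * P k (x i)) ≤
      ∑ i, Real.log (∑ k, lamb k * Pbar k (x i)) := by
  rcases Nat.eq_zero_or_pos N with hN | hN
  · subst hN; simp
  have hK : K ≠ 0 := by rintro rfl; simp at hlam1
  haveI : Nonempty (Fin K) := Fin.pos_iff_nonempty.mp (Nat.pos_of_ne_zero hK)
  haveI : Nonempty (Fin N) := Fin.pos_iff_nonempty.mp hN
  have hs : ∀ i, 0 < ∑ k, lam k * P k (x i) := fun i =>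
    Finset.sum_pos (fun k _ => mul_pos (hlam k) (hP k _)) Finset.univ_nonempty
  have hγpos : ∀ k i, 0 < γ k i := fun k i => by
    rw [hγ]; exact div_pos (mul_pos (hlam k) (hP k _)) (hs i)
  have hγsum : ∀ i, ∑ k, γ k i = 1 := fun i => by
    simp only [hγ]
    rw [← Finset.sum_div, div_self (hs i).ne']
  have hΓpos : ∀ k, 0 < Γ k := fun k => by
    rw [hΓ]; exact Finset.sum_pos (fun i _ => hγpos k i) Finset.univ_nonempty
  have hNpos : (0 : ℝ) < (N : ℝ) := by exact_mod_cast hN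
  have hΓsum : ∑ k, Γ k = (N : ℝ) := by
    simp only [hΓ]
    rw [Finset.sum_comm]
    simp [hγsum]
  have hlambpos : ∀ k, 0 < lamb k := fun k => by
    rw [hlamb]; exact div_pos (hΓpos k) hNpos
  have hlambsum : ∑ k, lamb k = 1 := by
    simp only [hlamb]
    rw [← Finset.sum_div, hΓsum, div_self hNpos.ne']
  have hwsum : ∀ k, ∑ i, w k i = 1 := fun k => by
    simp only [hw]
    rw [← Finset.sum_div, ← hΓ, div_self (hΓpos k).ne']
  have hγw : ∀ k i, γ k i = Γ k * w k i := fun k i => by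
    rw [hw, mul_div_cancel₀ _ (hΓpos k).ne']
  have logγ : ∀ k i, Real.log (γ k i)
      = Real.log (lam k * P k (x i)) - Real.log (∑ k', lam k' * P k' (x i)) := fun k i => by
    rw [hγ, Real.log_div (mul_pos (hlam k) (hP k _)).ne' (hs i).ne']
  -- Step A : exact decomposition of the old log-likelihood
  have stepA : ∀ i, Real.log (∑ k, lam k * P k (x i))
      = ∑ k, γ k i * (Real.log (lam k * P k (x i)) - Real.log (γ k i)) := by
    intro i
    have h : ∀ k : Fin K, γ k i * (Real.log (lam k * P k (x i)) - Real.log (γ k i))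
        = γ k i * Real.log (∑ k', lam k' * P k' (x i)) := fun k => by rw [logγ]; ring
    rw [Finset.sum_congr rfl (fun k _ => h k), ← Finset.sum_mul, hγsum, one_mul]
  -- Step B : Jensen bound for the new log-likelihood
  have stepB : ∀ i, ∑ k, γ k i * (Real.log (lamb k * Pbar k (x i)) - Real.log (γ k i))
      ≤ Real.log (∑ k, lamb k * Pbar k (x i)) := by
    intro i
    have hy : ∀ k : Fin K, 0 < lamb k * Pbar k (x i) / γ k i := fun k =>
      div_pos (mul_pos (hlambpos k) (hPbar k _)) (hγpos k i)
    have h := jensen_log (fun k => γ k i) (fun k => lamb k * Pbar k (x i) / γ k i)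
      (fun k => (hγpos k i).le) (hγsum i) hy
    have h1 : (∑ k, γ k i * Real.log (lamb k * Pbar k (x i) / γ k i))
        = ∑ k, γ k i * (Real.log (lamb k * Pbar k (x i)) - Real.log (γ k i)) :=
      Finset.sum_congr rfl fun k _ => by
        rw [Real.log_div (mul_pos (hlambpos k) (hPbar k _)).ne' (hγpos k i).ne']
    have h2 : (∑ k, γ k i * (lamb k * Pbar k (x i) / γ k i))
        = ∑ k, lamb k * Pbar k (x i) :=
      Finset.sum_congr rfl fun k _ => by
        rw [mul_comm, div_mul_cancel₀ _ (hγpos k i).ne']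
    rw [h1, h2] at h
    exact h
  -- Gibbs inequality for the mixture weights
  have gibbs : ∑ k, Γ k * Real.log (lam k) ≤ ∑ k, Γ k * Real.log (lamb k) := by
    have hy : ∀ k : Fin K, 0 < lam k / lamb k := fun k =>
      div_pos (hlam k) (hlambpos k)
    have h := jensen_log lamb (fun k => lam k / lamb k)
      (fun k => (hlambpos k).le) hlambsum hy
    have h2 : (∑ k, lamb k * (lam k / lamb k)) = ∑ k, lam k :=
      Finset.sum_congr rfl fun k _ => by
        rw [mul_comm, div_mul_cancel₀ _ (hlambpos k).ne']
    rw [h2, hlam1, Real.log_one] at h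
    have h1 : (∑ k, lamb k * Real.log (lam k / lamb k))
        = ∑ k, (lamb k * Real.log (lam k) - lamb k * Real.log (lamb k)) :=
      Finset.sum_congr rfl fun k _ => by
        rw [Real.log_div (hlam k).ne' (hlambpos k).ne']; ring
    rw [h1, Finset.sum_sub_distrib, sub_nonpos] at h
    have hΓl : ∀ k : Fin K, Γ k = (N : ℝ) * lamb k := fun k => by
      rw [hlamb, mul_div_cancel₀ _ hNpos.ne']
    calc ∑ k, Γ k * Real.log (lam k) = (N:ℝ) * ∑ k, lamb k * Real.log (lam k) := by
          rw [Finset.mul_sum]; exact Finset.sum_congr rfl fun k _ => by rw [hΓl]; ring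
      _ ≤ (N:ℝ) * ∑ k, lamb k * Real.log (lamb k) :=
          mul_le_mul_of_nonneg_left h hNpos.le
      _ = ∑ k, Γ k * Real.log (lamb k) := by
          rw [Finset.mul_sum]; exact Finset.sum_congr rfl fun k _ => by rw [hΓl]; ring
  -- expansion of the double sums
  have expand : ∀ (c : ℝ) (_ : 0 < c) (Q : D → ℝ) (_ : ∀ d, 0 < Q d) (k : Fin K),
      ∑ i, γ k i * Real.log (c * Q (x i))
        = Γ k * Real.log c + Γ k * ∑ i, w k i * Real.log (Q (x i)) := by
    intro c hc Q hQ k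
    have h1 : ∀ i : Fin N, γ k i * Real.log (c * Q (x i))
        = Γ k * (w k i * Real.log c) + Γ k * (w k i * Real.log (Q (x i))) := fun i => by
      rw [hγw, Real.log_mul hc.ne' (hQ (x i)).ne']; ring
    rw [Finset.sum_congr rfl fun i _ => h1 i, Finset.sum_add_distrib,
      ← Finset.mul_sum, ← Finset.mul_sum, ← Finset.sum_mul, hwsum, one_mul]
  -- Step C : the double-sum inequality
  have stepC : ∑ i, ∑ k, γ k i * Real.log (lam k * P k (x i))
      ≤ ∑ i, ∑ k, γ k i * Real.log (lamb k * Pbar k (x i)) := by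
    rw [Finset.sum_comm, Finset.sum_comm (f := fun i (k : Fin K) =>
      γ k i * Real.log (lamb k * Pbar k (x i)))]
    calc ∑ k, ∑ i, γ k i * Real.log (lam k * P k (x i))
        = ∑ k, (Γ k * Real.log (lam k) + Γ k * ∑ i, w k i * Real.log (P k (x i))) :=
          Finset.sum_congr rfl fun k _ => expand (lam k) (hlam k) (P k) (hP k) k
      _ = (∑ k, Γ k * Real.log (lam k))
            + ∑ k, Γ k * ∑ i, w k i * Real.log (P k (x i)) := Finset.sum_add_distrib
      _ ≤ (∑ k, Γ k * Real.log (lamb k))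
            + ∑ k, Γ k * ∑ i, w k i * Real.log (Pbar k (x i)) :=
          add_le_add gibbs (Finset.sum_le_sum fun k _ =>
            mul_le_mul_of_nonneg_left (hM k) (hΓpos k).le)
      _ = ∑ k, (Γ k * Real.log (lamb k) + Γ k * ∑ i, w k i * Real.log (Pbar k (x i))) :=
          Finset.sum_add_distrib.symm
      _ = ∑ k, ∑ i, γ k i * Real.log (lamb k * Pbar k (x i)) :=
          Finset.sum_congr rfl fun k _ =>
            (expand (lamb k) (hlambpos k) (Pbar k) (hPbar k) k).symm
  -- Conclusion
  calc ∑ i, Real.log (∑ k, lam k * P k (x i))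
      = ∑ i, ∑ k, γ k i * (Real.log (lam k * P k (x i)) - Real.log (γ k i)) :=
        Finset.sum_congr rfl fun i _ => stepA i
    _ ≤ ∑ i, ∑ k, γ k i * (Real.log (lamb k * Pbar k (x i)) - Real.log (γ k i)) := by
        simp only [mul_sub, Finset.sum_sub_distrib]
        exact sub_le_sub_right stepC _
    _ ≤ ∑ i, Real.log (∑ k, lamb k * Pbar k (x i)) :=
        Finset.sum_le_sum fun i _ => stepB i
end

section
/- Let S be a decomposable SPN over a finite set V of variables with finite nonempty domains, all of whose sum-node weights are nonnegative. Then for every subset Y ⊆ V and every partial assignment y of Y, the evaluation with partial evidence equals the sum of full evaluations over all completions: S(y) = ∑_{x total assignment of V with x restricted to Y equal to y} S(x). -/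
attribute [local instance] Classical.propDecidable

noncomputable section

/-! Induct on the number of unobserved variables. Summing out an unobserved variable `v`
commutes with evaluation: by decomposability `v` lies in the scope of exactly one factor of
each product node, so the sum over its values passes through the product, and at a sum node
the two sums are exchanged. On the other side, the completions of `y` split according to the
value they give to `v`. When no variable is unobserved, `y` has exactly one completion. -/

open Finset Function

namespace SPN

variable {Var : Type} {dom : Var → ℕ}

theorem eval_congr {S : SPN Var dom} {y y' : Var → Option ℕ}
    (h : ∀ v ∈ S.scope, y v = y' v) : S.eval y = S.eval y' := by
  induction S with
  | leaf v i => simp only [eval, Indicator, h v rfl]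
  | prod n c ih =>
    exact prod_congr rfl fun k _ => ih k fun v hv => h v (Set.mem_iUnion.2 ⟨k, hv⟩)
  | sum n w c ih =>
    exact sum_congr rfl fun k _ => congrArg _ (ih k fun v hv => h v (Set.mem_iUnion.2 ⟨k, hv⟩))

theorem eval_eq_sum_update [DecidableEq Var] {S : SPN Var dom} (hS : S.Valid) {v : Var}
    (hv : v ∈ S.scope) {y : Var → Option ℕ} (hyv : y v = none) :
    S.eval y = ∑ i : Fin (dom v), S.eval (update y v (some (i : ℕ))) := by
  induction S with
  | leaf u j =>
    obtain rfl : v = u := hv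
    have hj : j < dom v := hS
    have hval : ∀ i : Fin (dom v), (i : ℕ) = j ↔ i = ⟨j, hj⟩ := fun _ => by rw [Fin.ext_iff]
    simp only [eval, Indicator, hyv, update_self, hval, Fintype.sum_ite_eq']
  | prod n c ih =>
    obtain ⟨-, hc, hdisj⟩ := hS
    obtain ⟨k₀, hk₀⟩ := Set.mem_iUnion.1 hv
    have hrest : ∀ k ≠ k₀, ∀ i : ℕ, (c k).eval (update y v (some i)) = (c k).eval y :=
      fun k hk _ => eval_congr fun u hu =>
        update_of_ne (fun h => (hdisj k k₀ hk).ne_of_mem hu hk₀ h) _ _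
    simp only [eval]
    rw [← mul_prod_erase univ _ (mem_univ k₀), ih k₀ (hc k₀) hk₀, sum_mul]
    refine sum_congr rfl fun i _ => ?_
    rw [← mul_prod_erase univ _ (mem_univ k₀)]
    exact congrArg _ (prod_congr rfl fun k hk => (hrest k (ne_of_mem_erase hk) i).symm)
  | sum n w c ih =>
    obtain ⟨-, -, hc, hscope⟩ := hS
    obtain ⟨k₀, hk₀⟩ := Set.mem_iUnion.1 hv
    simp only [eval, fun k => ih k (hc k) (hscope k₀ k ▸ hk₀), mul_sum]
    exact sum_comm

end SPN

section PartialAssignment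

variable {Var : Type}

def InDomains (dom : Var → ℕ) (y : Var → Option ℕ) : Prop :=
  ∀ v i, y v = some i → i < dom v

theorem InDomains.update [DecidableEq Var] {dom : Var → ℕ} {y : Var → Option ℕ} (hy : InDomains dom y)
    {v : Var} (i : Fin (dom v)) : InDomains dom (update y v (some (i : ℕ))) := by
  intro u j hj
  rcases eq_or_ne u v with rfl | huv
  · exact Option.some_injective _ ((update_self u _ y).symm.trans hj) ▸ i.2
  · exact hy u j ((update_of_ne huv _ y).symm.trans hj)

variable [Fintype Var]

def unobserved (y : Var → Option ℕ) : Finset Var :=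
  univ.filter fun v => y v = none

theorem InDomains.exists_eq_some_of_unobserved_eq_empty {dom : Var → ℕ} {y : Var → Option ℕ}
    (hy : InDomains dom y) (h : unobserved y = ∅) :
    ∃ x : ∀ v, Fin (dom v), ∀ v, y v = some (x v : ℕ) := by
  have hobs (v : Var) : ∃ i : Fin (dom v), y v = some (i : ℕ) := by
    obtain ⟨i, hi⟩ := Option.ne_none_iff_exists'.1 fun hv =>
      filter_eq_empty_iff.1 h (mem_univ v) hv
    exact ⟨⟨i, hy v i hi⟩, hi⟩
  choose x hx using hobs
  exact ⟨x, hx⟩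

variable [DecidableEq Var]

theorem unobserved_update_some {y : Var → Option ℕ} (v : Var) (a : ℕ) :
    unobserved (update y v (some a)) = (unobserved y).erase v := by
  ext u
  rcases eq_or_ne u v with rfl | huv <;> simp [unobserved, update_of_ne, *]

def completions (dom : Var → ℕ) (y : Var → Option ℕ) : Finset (∀ v, Fin (dom v)) :=
  univ.filter fun x => ∀ (v : Var) (i : ℕ), y v = some i → (x v : ℕ) = i

theorem completions_eq_singleton {dom : Var → ℕ} {y : Var → Option ℕ}
    {x : ∀ v, Fin (dom v)} (hx : ∀ v, y v = some (x v : ℕ)) : completions dom y = {x} := by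
  ext x'
  simp only [completions, mem_filter, mem_univ, true_and, mem_singleton, hx,
    Option.some.injEq]
  exact ⟨fun h => funext fun v => Fin.ext (h v _ rfl), fun h v i hi => h ▸ hi⟩

theorem filter_completions_eq_completions_update {dom : Var → ℕ} {y : Var → Option ℕ}
    {v : Var} (hv : y v = none) (i : Fin (dom v)) :
    (completions dom y).filter (fun x => x v = i) =
      completions dom (update y v (some (i : ℕ))) := by
  ext x
  simp only [completions, mem_filter, mem_univ, true_and]
  constructor
  · rintro ⟨hx, rfl⟩ u j hj
    rcases eq_or_ne u v with rfl | huv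
    · exact Option.some_injective _ ((update_self u _ y).symm.trans hj)
    · exact hx u j ((update_of_ne huv _ y).symm.trans hj)
  · intro hx
    refine ⟨fun u j hj => hx u j ?_, Fin.ext (hx v i (update_self v _ y))⟩
    rwa [update_of_ne (by rintro rfl; simp [hv] at hj)]

end PartialAssignment

theorem spn_partial_evaluation_eq_sum_completions_general {Var : Type}
    [Fintype Var] [DecidableEq Var] {dom : Var → ℕ}
    (S : SPN Var dom) (hS : S.Valid) (hscope : S.scope = (Set.univ : Set Var))
    (y : Var → Option ℕ) (hy : ∀ v i, y v = some i → i < dom v) :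
    S.eval y =
      ∑ x ∈ Finset.univ.filter
          (fun x : ∀ v : Var, Fin (dom v) =>
            ∀ (v : Var) (i : ℕ), y v = some i → (x v : ℕ) = i),
        S.eval fun v => some ((x v : ℕ)) := by
  change S.eval y = ∑ x ∈ completions dom y, S.eval fun v => some (x v : ℕ)
  replace hy : InDomains dom y := hy
  induction hn : #(unobserved y) generalizing y with
  | zero =>
    obtain ⟨x, hx⟩ := hy.exists_eq_some_of_unobserved_eq_empty (card_eq_zero.1 hn)
    rw [completions_eq_singleton hx, sum_singleton]
    exact SPN.eval_congr fun v _ => hx v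
  | succ n ih =>
    obtain ⟨v, hv⟩ : ∃ v, y v = none := by
      by_contra! h
      simp [unobserved, h] at hn
    have hn' (i : Fin (dom v)) : #(unobserved (update y v (some (i : ℕ)))) = n := by
      rw [unobserved_update_some, card_erase_of_mem (by simp [unobserved, hv]), hn,
        Nat.add_sub_cancel]
    calc S.eval y = ∑ i : Fin (dom v), S.eval (update y v (some (i : ℕ))) :=
          SPN.eval_eq_sum_update hS (hscope ▸ Set.mem_univ v) hv
      _ = ∑ i : Fin (dom v), ∑ x ∈ (completions dom y).filter (fun x => x v = i),
            S.eval fun u => some (x u : ℕ) := by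
          refine sum_congr rfl fun i _ => ?_
          rw [filter_completions_eq_completions_update hv, ih _ (hy.update i) (hn' i)]
      _ = _ := sum_fiberwise _ _ _

/-- Let `S` be a decomposable SPN over a finite set of variables with
finite nonempty domains (with scope all of the variables), all of whose sum-node weights
are nonnegative.  Then for every partial assignment `y` (taking values inside the
domains), the evaluation with partial evidence equals the sum of full evaluations over
all completions: `S(y) = ∑_{x total, x|_Y = y} S(x)`. -/
theorem spn_partial_evaluation_eq_sum_completions {Var : Type}
    [Fintype Var] [DecidableEq Var] {dom : Var → ℕ} (hdom : ∀ v : Var, 0 < dom v)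
    (S : SPN Var dom) (hS : S.Valid) (hscope : S.scope = (Set.univ : Set Var))
    (y : Var → Option ℕ) (hy : ∀ v i, y v = some i → i < dom v) :
    S.eval y =
      ∑ x ∈ Finset.univ.filter
          (fun x : ∀ v : Var, Fin (dom v) =>
            ∀ (v : Var) (i : ℕ), y v = some i → (x v : ℕ) = i),
        S.eval fun v => some ((x v : ℕ)) :=
  spn_partial_evaluation_eq_sum_completions_general S hS hscope y hy
end
end
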